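/- arXiv:2202.03383 — 2 statements merged into one kernel-verified Lean document; each statement's English description precedes it below -/
import Mathlib

section
/- Let d ∈ ℕ, m ∈ ℝ, a ∈ Ŝ^m(ℝ^d × ℝ^d), and ε > 0. Let χ ∈ C_c^∞(ℝ^d × ℝ^d) with 0 ≤ χ ≤ 1, χ(x,y) = 1 whenever |x| ≤ 1 and |y| ≤ 1, and χ(x,y) = 0 whenever |x| ≥ 2 or |y| ≥ 2. Then the family (x,y,k) ↦ a(x,y,k) · (χ(k^{1/2−ε} x, k^{1/2−ε} y) − 1) belongs to Ŝ^{m−r}(ℝ^d × ℝ^d) for every r ∈ ℕ; that is, it belongs to Ŝ^{−∞}(ℝ^d × ℝ^d). -/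
open MeasureTheory

noncomputable section

/-- `ℝ^d` with the Euclidean norm. -/
abbrev Vec (d : ℕ) : Type := EuclideanSpace ℝ (Fin d)

/-- Partial derivative in the first variable, in the `i`-th coordinate direction. -/
noncomputable def pdX {d : ℕ} (i : Fin d) (f : Vec d → Vec d → ℂ) : Vec d → Vec d → ℂ :=
  fun x y => fderiv ℝ (fun x' => f x' y) x (EuclideanSpace.single i (1 : ℝ))

/-- Partial derivative in the second variable, in the `i`-th coordinate direction. -/
noncomputable def pdY {d : ℕ} (i : Fin d) (f : Vec d → Vec d → ℂ) : Vec d → Vec d → ℂ :=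
  fun x y => fderiv ℝ (fun y' => f x y') y (EuclideanSpace.single i (1 : ℝ))

/-- Iterated mixed partial derivative `∂_x^α ∂_y^β`. -/
noncomputable def mpd {d : ℕ} (α β : Fin d → ℕ) (f : Vec d → Vec d → ℂ) :
    Vec d → Vec d → ℂ :=
  (List.finRange d).foldr (fun i g => (pdX i)^[α i] g)
    ((List.finRange d).foldr (fun i g => (pdY i)^[β i] g) f)

/-- The semiclassical symbol space `Ŝ^m(ℝ^d × ℝ^d)`: families `a(·,·,k)`, `k ∈ ℕ`, of smooth
functions such that for all multi-indices `α, β` there are `l, k₀` so that for every `N > 0`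
there is `C > 0` with
`|∂_x^α ∂_y^β a(x,y,k)| ≤ C k^{m+(|α|+|β|)/2} (1+√k|x|+√k|y|)^l / (1+√k|x−y|)^N`
for all `x, y` and all `k ≥ k₀`. -/
def SymbClass (d : ℕ) (m : ℝ) (a : ℕ → Vec d → Vec d → ℂ) : Prop :=
  (∀ k : ℕ, ContDiff ℝ (⊤ : ℕ∞) (fun p : Vec d × Vec d => a k p.1 p.2)) ∧
  ∀ α β : Fin d → ℕ, ∃ l : ℕ, ∃ k₀ : ℕ, ∀ N : ℝ, 0 < N → ∃ C : ℝ, 0 < C ∧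
    ∀ k : ℕ, k₀ ≤ k → ∀ x y : Vec d,
      ‖mpd α β (a k) x y‖ ≤
        C * (k : ℝ) ^ (m + (((∑ i, α i) + (∑ i, β i) : ℕ) : ℝ) / 2) *
          (1 + Real.sqrt k * ‖x‖ + Real.sqrt k * ‖y‖) ^ l /
          (1 + Real.sqrt k * ‖x - y‖) ^ N

/-- The space `Ŝ(ℝ^d × ℝ^d)` of smooth functions rapidly decreasing off the diagonal:
for all multi-indices `α, β` there is `l` so that for every `N > 0` there is `C > 0` with
`|∂_x^α ∂_y^β a(x,y)| ≤ C (1+|x|+|y|)^l / (1+|x−y|)^N` for all `x, y`. -/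
def SchwartzOffDiag (d : ℕ) (a : Vec d → Vec d → ℂ) : Prop :=
  ContDiff ℝ (⊤ : ℕ∞) (fun p : Vec d × Vec d => a p.1 p.2) ∧
  ∀ α β : Fin d → ℕ, ∃ l : ℕ, ∀ N : ℝ, 0 < N → ∃ C : ℝ, 0 < C ∧
    ∀ x y : Vec d,
      ‖mpd α β a x y‖ ≤ C * (1 + ‖x‖ + ‖y‖) ^ l / (1 + ‖x - y‖) ^ N


/-!
Write `λ = k^{1/2-ε}` and `b = χ - 1`. Viewing `∂_x^α ∂_y^β` as an iterated directional
derivative on `ℝ^d × ℝ^d`, the Leibniz rule writes `∂_x^α ∂_y^β (a · b(λ ·))` as a sum of products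
`∂_x^γ ∂_y^δ a · ∂^T (b(λ ·))` with `|γ| + |δ| + |T| = |α| + |β|`. The second factor is
`λ^{|T|} (∂^T b)(λ ·) = O(λ^{|T|})`, and `λ ≤ √k` keeps the power of `k` in line. Since `b` vanishes
near the unit box, the product vanishes unless `λ|x| ≥ 1` or `λ|y| ≥ 1`, and there
`k^ε ≤ 1 + √k|x| + √k|y|`: any extra power `k^r` is absorbed by raising the weight exponent
`l` by `⌈r/ε⌉`.
-/

open Function

section DirectionalDerivative

variable {E : Type*} [NormedAddCommGroup E] [NormedSpace ℝ E]

def dirDeriv (v : E) (F : E → ℂ) : E → ℂ := fun p => fderiv ℝ F p v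

def iterDirDeriv (L : List E) (F : E → ℂ) : E → ℂ := L.foldr dirDeriv F

@[simp] lemma iterDirDeriv_nil (F : E → ℂ) : iterDirDeriv [] F = F := rfl

lemma iterDirDeriv_cons (v : E) (L : List E) (F : E → ℂ) :
    iterDirDeriv (v :: L) F = dirDeriv v (iterDirDeriv L F) := rfl

lemma iterDirDeriv_append (L₁ L₂ : List E) (F : E → ℂ) :
    iterDirDeriv (L₁ ++ L₂) F = iterDirDeriv L₁ (iterDirDeriv L₂ F) :=
  List.foldr_append ..

lemma iterDirDeriv_replicate (n : ℕ) (v : E) (F : E → ℂ) :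
    iterDirDeriv (List.replicate n v) F = (dirDeriv v)^[n] F := by
  induction n with
  | zero => rfl
  | succ n ih => rw [List.replicate_succ, iterDirDeriv_cons, ih, iterate_succ_apply']

lemma ContDiff.dirDeriv {F : E → ℂ} (hF : ContDiff ℝ (⊤ : ℕ∞) F) (v : E) :
    ContDiff ℝ (⊤ : ℕ∞) (dirDeriv v F) :=
  (hF.fderiv_right (by exact_mod_cast le_top)).clm_apply contDiff_const

lemma ContDiff.iterDirDeriv {F : E → ℂ} (hF : ContDiff ℝ (⊤ : ℕ∞) F) (L : List E) :
    ContDiff ℝ (⊤ : ℕ∞) (iterDirDeriv L F) := by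
  induction L with
  | nil => exact hF
  | cons v L ih => exact ih.dirDeriv v

lemma iterDirDeriv_eq_zero_of_isOpen {U : Set E} (hU : IsOpen U) {F : E → ℂ}
    (hF : ∀ p ∈ U, F p = 0) (L : List E) : ∀ p ∈ U, iterDirDeriv L F p = 0 := by
  induction L with
  | nil => exact hF
  | cons v L ih =>
    intro p hp
    have hev : iterDirDeriv L F =ᶠ[nhds p] fun _ => 0 :=
      Filter.eventuallyEq_of_mem (hU.mem_nhds hp) ih
    simp [iterDirDeriv_cons, dirDeriv, hev.fderiv_eq]

lemma exists_iterDirDeriv_sub_const (F : E → ℂ) (c : ℂ) (L : List E) :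
    ∃ c' : ℂ, ‖c'‖ ≤ ‖c‖ ∧
      iterDirDeriv L (fun p => F p - c) = fun p => iterDirDeriv L F p - c' := by
  induction L with
  | nil => exact ⟨c, le_rfl, rfl⟩
  | cons v L ih =>
    obtain ⟨c', -, hc'⟩ := ih
    refine ⟨0, by simp, funext fun p => ?_⟩
    simp [iterDirDeriv_cons, dirDeriv, hc', fderiv_sub_const]

lemma iterDirDeriv_comp_smul (c : ℝ) {G : E → ℂ} (hG : ContDiff ℝ (⊤ : ℕ∞) G) (L : List E) :
    iterDirDeriv L (fun p => G (c • p)) =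
      fun p => (c : ℂ) ^ L.length * iterDirDeriv L G (c • p) := by
  induction L with
  | nil => simp
  | cons v L ih =>
    funext p
    have hd : DifferentiableAt ℝ (fun q => iterDirDeriv L G (c • q)) p :=
      ((hG.iterDirDeriv L).comp (contDiff_const_smul c)).differentiable (by simp) p
    simp only [iterDirDeriv_cons, dirDeriv, ih]
    rw [fderiv_const_mul hd, fderiv_comp_smul (f := iterDirDeriv L G)]
    simp only [smul_apply, Complex.real_smul, smul_eq_mul, List.length_cons, pow_succ]
    ring

lemma exists_iterDirDeriv_mul (L : List E) :
    ∃ (n : ℕ) (S : Fin n → List E × List E),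
      (∀ j, (S j).1.Sublist L ∧ (S j).1.length + (S j).2.length = L.length) ∧
      ∀ F G : E → ℂ, ContDiff ℝ (⊤ : ℕ∞) F → ContDiff ℝ (⊤ : ℕ∞) G →
        iterDirDeriv L (fun p => F p * G p) =
          fun p => ∑ j, iterDirDeriv (S j).1 F p * iterDirDeriv (S j).2 G p := by
  induction L with
  | nil => exact ⟨1, fun _ => ([], []), fun _ => ⟨.refl _, rfl⟩, fun F G _ _ => by simp⟩
  | cons v L ih =>
    obtain ⟨n, S, hS, hmul⟩ := ih
    refine ⟨n + n, Fin.append (fun j => (v :: (S j).1, (S j).2))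
      (fun j => ((S j).1, v :: (S j).2)), fun j => ?_, fun F G hF hG => funext fun p => ?_⟩
    · refine Fin.addCases (fun j => ?_) (fun j => ?_) j
      · simp only [Fin.append_left, List.length_cons]
        exact ⟨(hS j).1.cons_cons v, by have := (hS j).2; omega⟩
      · simp only [Fin.append_right, List.length_cons]
        exact ⟨(hS j).1.cons v, by have := (hS j).2; omega⟩
    have hdF : ∀ j, DifferentiableAt ℝ (iterDirDeriv (S j).1 F) p := fun j =>
      (hF.iterDirDeriv _).differentiable (by simp) p
    have hdG : ∀ j, DifferentiableAt ℝ (iterDirDeriv (S j).2 G) p := fun j =>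
      (hG.iterDirDeriv _).differentiable (by simp) p
    simp only [iterDirDeriv_cons, dirDeriv, hmul F G hF hG]
    rw [fderiv_fun_sum (A := fun j q => iterDirDeriv (S j).1 F q * iterDirDeriv (S j).2 G q)
      fun j _ => (hdF j).mul (hdG j), sum_apply,
      Fin.sum_univ_add, ← Finset.sum_add_distrib]
    refine Finset.sum_congr rfl fun j _ => ?_
    rw [fderiv_fun_mul (hdF j) (hdG j)]
    simp only [Fin.append_left, Fin.append_right, iterDirDeriv_cons, dirDeriv,
      add_apply, smul_apply, smul_eq_mul]
    ring

lemma exists_bound_iterDirDeriv_sub_const {F : E → ℂ} (hF : ContDiff ℝ (⊤ : ℕ∞) F)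
    (hsupp : HasCompactSupport F) (c : ℂ) (L : List E) :
    ∃ M, 0 ≤ M ∧ ∀ p, ‖iterDirDeriv L (fun p => F p - c) p‖ ≤ M := by
  have hsuppL : HasCompactSupport (iterDirDeriv L F) :=
    HasCompactSupport.intro hsupp fun p hp =>
      iterDirDeriv_eq_zero_of_isOpen (isClosed_tsupport F).isOpen_compl
        (fun _ => image_eq_zero_of_notMem_tsupport) L p hp
  obtain ⟨C, hC⟩ := hsuppL.exists_bound_of_continuous (hF.iterDirDeriv L).continuous
  obtain ⟨c', hc', hL⟩ := exists_iterDirDeriv_sub_const F c L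
  refine ⟨C + ‖c‖, add_nonneg ((norm_nonneg _).trans (hC 0)) (norm_nonneg c), fun p => ?_⟩
  rw [hL]
  exact (norm_sub_le _ _).trans (add_le_add (hC p) hc')

end DirectionalDerivative

def multiIndexDirs {ι E : Type*} (l : List ι) (α : ι → ℕ) (e : ι → E) : List E :=
  l.flatMap fun i => List.replicate (α i) (e i)

section MultiIndex

variable {ι E : Type*}

lemma length_multiIndexDirs (l : List ι) (α : ι → ℕ) (e : ι → E) :
    (multiIndexDirs l α e).length = (l.map α).sum := by
  simp [multiIndexDirs, List.length_flatMap]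

lemma List.Sublist.exists_eq_multiIndexDirs {l : List ι} (hl : l.Nodup) {α : ι → ℕ}
    {e : ι → E} {s : List E} (hs : s.Sublist (multiIndexDirs l α e)) :
    ∃ γ : ι → ℕ, s = multiIndexDirs l γ e := by
  classical
  induction l generalizing s with
  | nil => exact ⟨α, by simpa [multiIndexDirs] using hs⟩
  | cons i l ih =>
    obtain ⟨hi, hl⟩ := List.nodup_cons.1 hl
    obtain ⟨s₁, s₂, rfl, h₁, h₂⟩ := List.sublist_append_iff.1 hs
    obtain ⟨n, -, rfl⟩ := List.sublist_replicate_iff.1 h₁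
    obtain ⟨γ, rfl⟩ := ih hl h₂
    refine ⟨update γ i n, ?_⟩
    simp only [multiIndexDirs, List.flatMap_cons, update_self]
    congr 1
    exact List.flatMap_congr fun j hj => by rw [update_of_ne (ne_of_mem_of_not_mem hj hi)]

end MultiIndex

section Product

variable {ι E₁ E₂ : Type*} [NormedAddCommGroup E₁] [NormedSpace ℝ E₁]
  [NormedAddCommGroup E₂] [NormedSpace ℝ E₂]

lemma fderiv_comp_prodMk_left_apply {F : E₁ × E₂ → ℂ} {x : E₁} {y : E₂}
    (hF : DifferentiableAt ℝ F (x, y)) (v : E₁) :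
    fderiv ℝ (fun x' => F (x', y)) x v = fderiv ℝ F (x, y) (v, 0) :=
  DFunLike.congr_fun (hF.hasFDerivAt.comp x (hasFDerivAt_prodMk_left (𝕜 := ℝ) x y)).fderiv v

lemma fderiv_comp_prodMk_right_apply {F : E₁ × E₂ → ℂ} {x : E₁} {y : E₂}
    (hF : DifferentiableAt ℝ F (x, y)) (v : E₂) :
    fderiv ℝ (fun y' => F (x, y')) y v = fderiv ℝ F (x, y) (0, v) :=
  DFunLike.congr_fun (hF.hasFDerivAt.comp y (hasFDerivAt_prodMk_right (𝕜 := ℝ) x y)).fderiv v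

lemma uncurry_iterate {D : (E₁ → E₂ → ℂ) → E₁ → E₂ → ℂ} {e : E₁ × E₂}
    (hD : ∀ g, ContDiff ℝ (⊤ : ℕ∞) (uncurry g) → uncurry (D g) = dirDeriv e (uncurry g))
    (n : ℕ) {f : E₁ → E₂ → ℂ} (hf : ContDiff ℝ (⊤ : ℕ∞) (uncurry f)) :
    uncurry (D^[n] f) = iterDirDeriv (List.replicate n e) (uncurry f) := by
  induction n with
  | zero => rfl
  | succ n ih =>
    have hsmooth : ContDiff ℝ (⊤ : ℕ∞) (uncurry (D^[n] f)) := ih ▸ hf.iterDirDeriv _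
    rw [iterate_succ_apply', hD _ hsmooth, ih, List.replicate_succ, iterDirDeriv_cons]

lemma uncurry_foldr_iterate {D : ι → (E₁ → E₂ → ℂ) → E₁ → E₂ → ℂ} {e : ι → E₁ × E₂}
    (hD : ∀ i g, ContDiff ℝ (⊤ : ℕ∞) (uncurry g) → uncurry (D i g) = dirDeriv (e i) (uncurry g))
    (α : ι → ℕ) (l : List ι) {f : E₁ → E₂ → ℂ} (hf : ContDiff ℝ (⊤ : ℕ∞) (uncurry f)) :
    uncurry (l.foldr (fun i g => (D i)^[α i] g) f) =
      iterDirDeriv (multiIndexDirs l α e) (uncurry f) := by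
  induction l with
  | nil => rfl
  | cons i l ih =>
    have hsmooth := ih ▸ hf.iterDirDeriv (multiIndexDirs l α e)
    rw [List.foldr_cons, uncurry_iterate (hD i) _ hsmooth, ih]
    simp only [multiIndexDirs, List.flatMap_cons, iterDirDeriv_append]

end Product

section MixedPartials

variable {d : ℕ}

def mpdDirs (α β : Fin d → ℕ) : List (Vec d × Vec d) :=
  multiIndexDirs (List.finRange d) α (fun i => (EuclideanSpace.single i 1, 0)) ++
    multiIndexDirs (List.finRange d) β (fun i => (0, EuclideanSpace.single i 1))

lemma length_mpdDirs (α β : Fin d → ℕ) :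
    (mpdDirs α β).length = (∑ i, α i) + ∑ i, β i := by
  simp [mpdDirs, length_multiIndexDirs, Fin.sum_univ_def]

lemma exists_eq_mpdDirs_of_sublist {α β : Fin d → ℕ} {s : List (Vec d × Vec d)}
    (hs : s.Sublist (mpdDirs α β)) : ∃ γ δ : Fin d → ℕ, s = mpdDirs γ δ := by
  obtain ⟨s₁, s₂, rfl, h₁, h₂⟩ := List.sublist_append_iff.1 hs
  obtain ⟨γ, rfl⟩ := h₁.exists_eq_multiIndexDirs (List.nodup_finRange d)
  obtain ⟨δ, rfl⟩ := h₂.exists_eq_multiIndexDirs (List.nodup_finRange d)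
  exact ⟨γ, δ, rfl⟩

lemma uncurry_pdX (i : Fin d) {g : Vec d → Vec d → ℂ} (hg : Differentiable ℝ (uncurry g)) :
    uncurry (pdX i g) = dirDeriv (EuclideanSpace.single i 1, 0) (uncurry g) :=
  funext fun p => fderiv_comp_prodMk_left_apply (hg p) _

lemma uncurry_pdY (i : Fin d) {g : Vec d → Vec d → ℂ} (hg : Differentiable ℝ (uncurry g)) :
    uncurry (pdY i g) = dirDeriv (0, EuclideanSpace.single i 1) (uncurry g) :=
  funext fun p => fderiv_comp_prodMk_right_apply (hg p) _

lemma uncurry_mpd (α β : Fin d → ℕ) {f : Vec d → Vec d → ℂ}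
    (hf : ContDiff ℝ (⊤ : ℕ∞) (uncurry f)) :
    uncurry (mpd α β f) = iterDirDeriv (mpdDirs α β) (uncurry f) := by
  have hY := uncurry_foldr_iterate (fun i _ hg => uncurry_pdY i (hg.differentiable (by simp)))
    β (List.finRange d) hf
  rw [mpd, uncurry_foldr_iterate (fun i _ hg => uncurry_pdX i (hg.differentiable (by simp))) α _
    (hY ▸ hf.iterDirDeriv _), hY, mpdDirs, iterDirDeriv_append]

lemma exists_mpd_mul_eq_sum (α β : Fin d → ℕ) :
    ∃ (n : ℕ) (γ δ : Fin n → Fin d → ℕ) (T : Fin n → List (Vec d × Vec d)),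
      (∀ j, (∑ i, γ j i) + (∑ i, δ j i) + (T j).length = (∑ i, α i) + ∑ i, β i) ∧
      ∀ (f : Vec d → Vec d → ℂ) (G : Vec d × Vec d → ℂ),
        ContDiff ℝ (⊤ : ℕ∞) (uncurry f) → ContDiff ℝ (⊤ : ℕ∞) G → ∀ x y,
          mpd α β (fun x y => f x y * G (x, y)) x y =
            ∑ j, mpd (γ j) (δ j) f x y * iterDirDeriv (T j) G (x, y) := by
  obtain ⟨n, S, hS, hmul⟩ := exists_iterDirDeriv_mul (mpdDirs α β)
  choose γ δ hγδ using fun j => exists_eq_mpdDirs_of_sublist (hS j).1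
  refine ⟨n, γ, δ, fun j => (S j).2, fun j => ?_, fun f G hf hG x y => ?_⟩
  · rw [← length_mpdDirs, ← length_mpdDirs, ← hγδ j]
    exact (hS j).2
  calc mpd α β (fun x y => f x y * G (x, y)) x y
      = iterDirDeriv (mpdDirs α β) (fun p => uncurry f p * G p) (x, y) :=
        congrFun (uncurry_mpd α β (f := fun x y => f x y * G (x, y)) (hf.mul hG)) (x, y)
    _ = ∑ j, iterDirDeriv (S j).1 (uncurry f) (x, y) * iterDirDeriv (S j).2 G (x, y) :=
        congrFun (hmul _ _ hf hG) (x, y)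
    _ = ∑ j, mpd (γ j) (δ j) f x y * iterDirDeriv (S j).2 G (x, y) := by
        refine Finset.sum_congr rfl fun j _ => ?_
        rw [hγδ j, ← uncurry_mpd _ _ hf]
        rfl

end MixedPartials

lemma exists_bound_iterDirDeriv_cutoff {E : Type*} [NormedAddCommGroup E] [NormedSpace ℝ E]
    {χ : E → ℝ} (hχ : ContDiff ℝ (⊤ : ℕ∞) χ) (hsupp : HasCompactSupport χ) (L : List E) :
    ∃ M, 0 ≤ M ∧ ∀ c : ℝ, 0 ≤ c → ∀ p,
      ‖iterDirDeriv L (fun p => (χ (c • p) : ℂ) - 1) p‖ ≤ c ^ L.length * M := by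
  have hχC : ContDiff ℝ (⊤ : ℕ∞) fun p => (χ p : ℂ) := Complex.ofRealCLM.contDiff.comp hχ
  obtain ⟨M, hM0, hM⟩ := exists_bound_iterDirDeriv_sub_const hχC
    (hsupp.comp_left Complex.ofReal_zero) 1 L
  refine ⟨M, hM0, fun c hc p => ?_⟩
  rw [iterDirDeriv_comp_smul c (G := fun p => (χ p : ℂ) - 1) (hχC.sub contDiff_const), norm_mul,
    norm_pow, Complex.norm_real, Real.norm_of_nonneg hc]
  exact mul_le_mul_of_nonneg_left (hM _) (pow_nonneg hc _)

lemma iterDirDeriv_cutoff_eq_zero {E₁ E₂ : Type*} [NormedAddCommGroup E₁] [NormedSpace ℝ E₁]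
    [NormedAddCommGroup E₂] [NormedSpace ℝ E₂] {χ : E₁ × E₂ → ℝ}
    (hχone : ∀ p : E₁ × E₂, ‖p.1‖ ≤ 1 → ‖p.2‖ ≤ 1 → χ p = 1) (L : List (E₁ × E₂))
    {c : ℝ} (hc : 0 ≤ c) {x : E₁} {y : E₂} (hx : c * ‖x‖ < 1) (hy : c * ‖y‖ < 1) :
    iterDirDeriv L (fun p => (χ (c • p) : ℂ) - 1) (x, y) = 0 := by
  have h₁ : IsOpen {p : E₁ × E₂ | c * ‖p.1‖ < 1} := isOpen_lt (by fun_prop) continuous_const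
  have h₂ : IsOpen {p : E₁ × E₂ | c * ‖p.2‖ < 1} := isOpen_lt (by fun_prop) continuous_const
  refine iterDirDeriv_eq_zero_of_isOpen (h₁.inter h₂) (fun p hp => ?_) L (x, y) ⟨hx, hy⟩
  rw [hχone _ (by simpa [norm_smul, abs_of_nonneg hc] using hp.1.le)
    (by simpa [norm_smul, abs_of_nonneg hc] using hp.2.le)]
  simp

section Estimates

variable {k ε s t : ℝ}

lemma rpow_le_weight_pow (hk : 1 ≤ k) (hε : 0 < ε) (hs : 0 ≤ s) (ht : 0 ≤ t)
    (h : 1 ≤ k ^ (1 / 2 - ε) * s ∨ 1 ≤ k ^ (1 / 2 - ε) * t) (r : ℕ) :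
    k ^ (r : ℝ) ≤ (1 + √k * s + √k * t) ^ ⌈r / ε⌉₊ := by
  have hsqrt : √k = k ^ ε * k ^ (1 / 2 - ε) := by
    rw [← Real.rpow_add (by linarith), Real.sqrt_eq_rpow]
    ring_nf
  have hkε : k ^ ε ≤ 1 + √k * s + √k * t := by
    have hkε0 : 0 ≤ k ^ ε := Real.rpow_nonneg (by linarith) ε
    have := Real.sqrt_nonneg k
    rcases h with h | h <;> nlinarith [le_mul_of_one_le_right hkε0 h]
  have hr : (r : ℝ) ≤ ε * ⌈r / ε⌉₊ := by
    rw [← div_le_iff₀' hε]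
    exact Nat.le_ceil _
  calc k ^ (r : ℝ) ≤ k ^ (ε * ⌈r / ε⌉₊) := Real.rpow_le_rpow_of_exponent_le hk hr
    _ = (k ^ ε) ^ ⌈r / ε⌉₊ := by rw [Real.rpow_mul (by linarith), Real.rpow_natCast]
    _ ≤ _ := pow_le_pow_left₀ (Real.rpow_nonneg (by linarith) ε) hkε _

lemma rpow_mul_pow_mul_pow_le (hk : 1 ≤ k) (hε : 0 < ε) (hs : 0 ≤ s) (ht : 0 ≤ t)
    (h : 1 ≤ k ^ (1 / 2 - ε) * s ∨ 1 ≤ k ^ (1 / 2 - ε) * t) (m : ℝ) {c n e l₀ l r : ℕ}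
    (hcn : c + n = e) (hl : l₀ + ⌈r / ε⌉₊ ≤ l) :
    k ^ (m + c / 2) * (k ^ (1 / 2 - ε)) ^ n * (1 + √k * s + √k * t) ^ l₀ ≤
      k ^ (m - r + e / 2) * (1 + √k * s + √k * t) ^ l := by
  have hk0 : 0 < k := by linarith
  have hW : 1 ≤ 1 + √k * s + √k * t := by
    have := Real.sqrt_nonneg k
    nlinarith [mul_nonneg this hs, mul_nonneg this ht]
  have hpow : (k ^ (1 / 2 - ε)) ^ n ≤ k ^ ((n : ℝ) / 2) := by
    rw [← Real.rpow_natCast, ← Real.rpow_mul hk0.le]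
    exact Real.rpow_le_rpow_of_exponent_le hk (by nlinarith [(Nat.cast_nonneg n : (0 : ℝ) ≤ n)])
  have hsplit : k ^ (m + c / 2) * k ^ ((n : ℝ) / 2) = k ^ (m - r + e / 2) * k ^ (r : ℝ) := by
    rw [← Real.rpow_add hk0, ← Real.rpow_add hk0, ← hcn]
    push_cast
    ring_nf
  calc k ^ (m + c / 2) * (k ^ (1 / 2 - ε)) ^ n * (1 + √k * s + √k * t) ^ l₀
      ≤ k ^ (m + c / 2) * k ^ ((n : ℝ) / 2) * (1 + √k * s + √k * t) ^ l₀ := by gcongr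
    _ = k ^ (m - r + e / 2) * (k ^ (r : ℝ) * (1 + √k * s + √k * t) ^ l₀) := by
        rw [hsplit]; ring
    _ ≤ k ^ (m - r + e / 2) *
          ((1 + √k * s + √k * t) ^ ⌈r / ε⌉₊ * (1 + √k * s + √k * t) ^ l₀) := by
        gcongr
        exact rpow_le_weight_pow hk hε hs ht h r
    _ ≤ k ^ (m - r + e / 2) * (1 + √k * s + √k * t) ^ l := by
        rw [← pow_add]
        gcongr
        omega

lemma norm_mul_le_of_symbol_bound_of_cutoff {A B : ℂ} {m C M D : ℝ} {c n e l₀ l r : ℕ}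
    (hk : 1 ≤ k) (hε : 0 < ε) (hs : 0 ≤ s) (ht : 0 ≤ t) (hC : 0 ≤ C) (hM : 0 ≤ M) (hD : 0 < D)
    (hA : ‖A‖ ≤ C * k ^ (m + c / 2) * (1 + √k * s + √k * t) ^ l₀ / D)
    (hB : ‖B‖ ≤ (k ^ (1 / 2 - ε)) ^ n * M)
    (hB0 : k ^ (1 / 2 - ε) * s < 1 → k ^ (1 / 2 - ε) * t < 1 → B = 0)
    (hcn : c + n = e) (hl : l₀ + ⌈r / ε⌉₊ ≤ l) :
    ‖A * B‖ ≤ C * M * (k ^ (m - r + e / 2) * (1 + √k * s + √k * t) ^ l / D) := by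
  by_cases hin : k ^ (1 / 2 - ε) * s < 1 ∧ k ^ (1 / 2 - ε) * t < 1
  · rw [hB0 hin.1 hin.2, mul_zero, norm_zero]
    have : 0 ≤ k ^ (m - r + e / 2) := Real.rpow_nonneg (by linarith) _
    positivity
  rw [not_and_or, not_lt, not_lt] at hin
  calc ‖A * B‖ = ‖A‖ * ‖B‖ := norm_mul A B
    _ ≤ (C * k ^ (m + c / 2) * (1 + √k * s + √k * t) ^ l₀ / D) * ((k ^ (1 / 2 - ε)) ^ n * M) :=
        mul_le_mul hA hB (norm_nonneg _) ((norm_nonneg _).trans hA)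
    _ = C * M * (k ^ (m + c / 2) * (k ^ (1 / 2 - ε)) ^ n * (1 + √k * s + √k * t) ^ l₀ / D) := by
        ring
    _ ≤ C * M * (k ^ (m - r + e / 2) * (1 + √k * s + √k * t) ^ l / D) := by
        refine mul_le_mul_of_nonneg_left ?_ (mul_nonneg hC hM)
        exact div_le_div_of_nonneg_right (rpow_mul_pow_mul_pow_le hk hε hs ht hin m hcn hl) hD.le

end Estimates

theorem stmt11_general (d : ℕ) (m : ℝ) (a : ℕ → Vec d → Vec d → ℂ) (ha : SymbClass d m a)
    (ε : ℝ) (hε : 0 < ε) (χ : Vec d × Vec d → ℝ)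
    (hχsmooth : ContDiff ℝ (⊤ : ℕ∞) χ) (hχsupp : HasCompactSupport χ)
    (hχone : ∀ p : Vec d × Vec d, ‖p.1‖ ≤ 1 → ‖p.2‖ ≤ 1 → χ p = 1) :
    ∀ r : ℕ, SymbClass d (m - r)
      (fun k x y => a k x y *
        (((χ ((k : ℝ) ^ ((1 : ℝ) / 2 - ε) • x, (k : ℝ) ^ ((1 : ℝ) / 2 - ε) • y) : ℝ) : ℂ)
          - 1)) := by
  intro r
  have hcut (c : ℝ) : ContDiff ℝ (⊤ : ℕ∞) fun p : Vec d × Vec d => (χ (c • p) : ℂ) - 1 :=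
    (Complex.ofRealCLM.contDiff.comp (hχsmooth.comp (contDiff_const_smul c))).sub contDiff_const
  refine ⟨fun k => (ha.1 k).mul (hcut _), fun α β => ?_⟩
  obtain ⟨n, γ, δ, T, hlen, hexp⟩ := exists_mpd_mul_eq_sum α β
  choose l k₀ hbound using fun j => ha.2 (γ j) (δ j)
  choose M hM0 hM using fun j => exists_bound_iterDirDeriv_cutoff hχsmooth hχsupp (T j)
  refine ⟨Finset.univ.sup l + ⌈r / ε⌉₊, Finset.univ.sup k₀ + 1, fun N hN => ?_⟩
  choose C hC0 hC using fun j => hbound j N hN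
  have hCM : 0 ≤ ∑ j, C j * M j := Finset.sum_nonneg fun j _ => mul_nonneg (hC0 j).le (hM0 j)
  refine ⟨∑ j, C j * M j + 1, by linarith, fun k hk x y => ?_⟩
  have hk1 : (1 : ℝ) ≤ k := Nat.one_le_cast.2 (by omega)
  have hk₀ (j) : k₀ j ≤ k := (Finset.le_sup (Finset.mem_univ j)).trans (by omega)
  have hl (j) : l j + ⌈r / ε⌉₊ ≤ Finset.univ.sup l + ⌈r / ε⌉₊ :=
    Nat.add_le_add_right (Finset.le_sup (Finset.mem_univ j)) _
  have hscale : 0 ≤ (k : ℝ) ^ ((1 : ℝ) / 2 - ε) := Real.rpow_nonneg (by positivity) _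
  have hD : 0 < (1 + √k * ‖x - y‖) ^ N := Real.rpow_pos_of_pos (by positivity) N
  refine (congrArg norm (hexp (a k) _ (ha.1 k) (hcut _) x y)).trans_le ?_
  refine (norm_sum_le _ _).trans ((Finset.sum_le_sum fun j _ =>
    norm_mul_le_of_symbol_bound_of_cutoff hk1 hε (norm_nonneg x) (norm_nonneg y) (hC0 j).le
      (hM0 j) hD (hC j k (hk₀ j) x y) (hM j _ hscale _)
      (fun hx hy => iterDirDeriv_cutoff_eq_zero hχone _ hscale hx hy) (hlen j) (hl j)).trans ?_)
  rw [← Finset.sum_mul]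
  calc (∑ j, C j * M j) * _ ≤ (∑ j, C j * M j + 1) * _ :=
        mul_le_mul_of_nonneg_right (by linarith) (by positivity)
    _ = _ := by ring

/-- If `a ∈ Ŝ^m(ℝ^d × ℝ^d)`, `ε > 0`, and `χ ∈ C_c^∞(ℝ^d × ℝ^d)` with `0 ≤ χ ≤ 1`,
`χ(x,y) = 1` for `|x| ≤ 1, |y| ≤ 1` and `χ(x,y) = 0` for `|x| ≥ 2` or `|y| ≥ 2`, then
`(x,y,k) ↦ a(x,y,k)·(χ(k^{1/2−ε}x, k^{1/2−ε}y) − 1)` belongs to `Ŝ^{m−r}(ℝ^d × ℝ^d)` for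
every `r ∈ ℕ`, i.e. it belongs to `Ŝ^{−∞}(ℝ^d × ℝ^d)`. -/
theorem stmt11 (d : ℕ) (m : ℝ) (a : ℕ → Vec d → Vec d → ℂ) (ha : SymbClass d m a)
    (ε : ℝ) (hε : 0 < ε) (χ : Vec d × Vec d → ℝ)
    (hχsmooth : ContDiff ℝ (⊤ : ℕ∞) χ) (hχsupp : HasCompactSupport χ)
    (hχ0 : ∀ p, 0 ≤ χ p) (hχ1 : ∀ p, χ p ≤ 1)
    (hχone : ∀ p : Vec d × Vec d, ‖p.1‖ ≤ 1 → ‖p.2‖ ≤ 1 → χ p = 1)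
    (hχzero : ∀ p : Vec d × Vec d, 2 ≤ ‖p.1‖ ∨ 2 ≤ ‖p.2‖ → χ p = 0) :
    ∀ r : ℕ, SymbClass d (m - r)
      (fun k x y => a k x y *
        (((χ ((k : ℝ) ^ ((1 : ℝ) / 2 - ε) • x, (k : ℝ) ^ ((1 : ℝ) / 2 - ε) • y) : ℝ) : ℂ)
          - 1)) :=
  stmt11_general d m a ha ε hε χ hχsmooth hχsupp hχone
end
end

section
/- Let H₀, H₁, H₂ be complex Hilbert spaces, and let S₀ : H₀ →ₚ H₁ and S₁ : H₁ →ₚ H₂ be densely defined unbounded linear operators with adjoints S₀† and S₁†, such that S₀x ∈ dom S₁ and S₁(S₀x) = 0 for every x ∈ dom S₀. Let c > 0 and let α ∈ dom S₁ with S₁α = 0. Suppose β ∈ H₁ satisfies: β ∈ dom S₀†, S₀†β ∈ dom S₀, β ∈ dom S₁, S₁β ∈ dom S₁†, S₀(S₀†β) + S₁†(S₁β) = α, and Re⟨β, α⟩ ≤ ‖α‖²/c. Then u := S₀†β satisfies S₀u = α and ‖u‖ ≤ c^{−1/2} ‖α‖. -/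
/-!
Since `S₁ ∘ S₀ = 0` and `S₁α = 0`, the vector `S₁†S₁β = α - S₀S₀†β` lies in `ker S₁`; but the range
of `S₁†` is orthogonal to `ker S₁`, so this component vanishes and `S₀(S₀†β) = α`. Then
`‖S₀†β‖² = Re⟨β, S₀S₀†β⟩ = Re⟨β, α⟩ ≤ ‖α‖²/c`.
-/

open scoped InnerProductSpace

theorem Real.le_rpow_neg_half_mul_of_sq_le_div {a b c : ℝ} (hc : 0 < c) (hb : 0 ≤ b)
    (h : a ^ 2 ≤ b ^ 2 / c) : a ≤ c ^ (-(1 : ℝ) / 2) * b := by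
  have hsqrt : c ^ (-(1 : ℝ) / 2) * b = √(b ^ 2 / c) := by
    rw [neg_div, Real.rpow_neg hc.le, ← Real.sqrt_eq_rpow, Real.sqrt_div' _ hc.le,
      Real.sqrt_sq hb, inv_mul_eq_div]
  rw [hsqrt]
  exact (le_abs_self a).trans (Real.abs_le_sqrt h)

namespace LinearPMap

variable {𝕜 E F : Type*} [RCLike 𝕜]
  [NormedAddCommGroup E] [InnerProductSpace 𝕜 E] [CompleteSpace E]
  [NormedAddCommGroup F] [InnerProductSpace 𝕜 F]
  {T : E →ₗ.[𝕜] F}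

theorem inner_adjoint_apply_eq_zero_of_apply_eq_zero (hT : Dense (T.domain : Set E))
    (y : T†.domain) {x : T.domain} (hx : T x = 0) : ⟪T† y, (x : E)⟫_𝕜 = 0 := by
  rw [adjoint_isFormalAdjoint hT y x, hx, inner_zero_right]

theorem adjoint_apply_eq_zero_of_apply_eq_zero (hT : Dense (T.domain : Set E))
    (y : T†.domain) {x : T.domain} (hx : T x = 0) (hyx : T† y = x) : T† y = 0 := by
  have horth := inner_adjoint_apply_eq_zero_of_apply_eq_zero hT y hx
  rw [hyx] at horth ⊢
  exact inner_self_eq_zero.mp horth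

theorem norm_adjoint_apply_sq (hT : Dense (T.domain : Set E))
    (y : T†.domain) (hy : T† y ∈ T.domain) :
    ‖T† y‖ ^ 2 = RCLike.re ⟪(y : F), T ⟨T† y, hy⟩⟫_𝕜 := by
  rw [← adjoint_isFormalAdjoint hT y ⟨T† y, hy⟩, inner_self_eq_norm_sq]

end LinearPMap

open LinearPMap in
/-- Abstract `L²`-existence theorem for the deformed Cauchy–Riemann operator: let
`S₀ : H₀ →ₚ H₁`, `S₁ : H₁ →ₚ H₂` be densely defined operators between complex Hilbert spaces
with `S₁ ∘ S₀ = 0`, let `c > 0`, let `α ∈ dom S₁` with `S₁α = 0`, and suppose `β` satisfies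
`β ∈ dom S₀†`, `S₀†β ∈ dom S₀`, `β ∈ dom S₁`, `S₁β ∈ dom S₁†`,
`S₀(S₀†β) + S₁†(S₁β) = α`, and `Re⟨β,α⟩ ≤ ‖α‖²/c`. Then `u := S₀†β` solves `S₀u = α` and
`‖u‖ ≤ c^{−1/2}‖α‖`. -/
theorem stmt17 {H₀ H₁ H₂ : Type*}
    [NormedAddCommGroup H₀] [InnerProductSpace ℂ H₀] [CompleteSpace H₀]
    [NormedAddCommGroup H₁] [InnerProductSpace ℂ H₁] [CompleteSpace H₁]
    [NormedAddCommGroup H₂] [InnerProductSpace ℂ H₂] [CompleteSpace H₂]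
    (S₀ : H₀ →ₗ.[ℂ] H₁) (S₁ : H₁ →ₗ.[ℂ] H₂)
    (hS₀ : Dense (S₀.domain : Set H₀)) (hS₁ : Dense (S₁.domain : Set H₁))
    (hcomp : ∀ x : S₀.domain, ∃ h : (S₀ x : H₁) ∈ S₁.domain, S₁ ⟨S₀ x, h⟩ = 0)
    (c : ℝ) (hc : 0 < c)
    (α : H₁) (hα : α ∈ S₁.domain) (hαclosed : S₁ ⟨α, hα⟩ = 0)
    (β : H₁) (hβ : β ∈ S₀.adjoint.domain)
    (hβ₀ : S₀.adjoint ⟨β, hβ⟩ ∈ S₀.domain)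
    (hβ₁ : β ∈ S₁.domain)
    (hβ₂ : S₁ ⟨β, hβ₁⟩ ∈ S₁.adjoint.domain)
    (hlap : S₀ ⟨S₀.adjoint ⟨β, hβ⟩, hβ₀⟩ + S₁.adjoint ⟨S₁ ⟨β, hβ₁⟩, hβ₂⟩ = α)
    (hbound : (inner ℂ β α : ℂ).re ≤ ‖α‖ ^ 2 / c) :
    S₀ ⟨S₀.adjoint ⟨β, hβ⟩, hβ₀⟩ = α ∧
      ‖S₀.adjoint ⟨β, hβ⟩‖ ≤ c ^ (-(1 : ℝ) / 2) * ‖α‖ := by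
  obtain ⟨hmem, hzero⟩ := hcomp ⟨S₀.adjoint ⟨β, hβ⟩, hβ₀⟩
  have hharmonic : S₁.adjoint ⟨S₁ ⟨β, hβ₁⟩, hβ₂⟩ = 0 := by
    refine adjoint_apply_eq_zero_of_apply_eq_zero hS₁ _ (x := ⟨α, hα⟩ - ⟨_, hmem⟩) ?_ ?_
    · rw [LinearPMap.map_sub, hαclosed, hzero, sub_zero]
    · exact eq_sub_of_add_eq' hlap
  have hsolve : S₀ ⟨S₀.adjoint ⟨β, hβ⟩, hβ₀⟩ = α := by
    rwa [hharmonic, add_zero] at hlap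
  refine ⟨hsolve, Real.le_rpow_neg_half_mul_of_sq_le_div hc (norm_nonneg α) ?_⟩
  rwa [norm_adjoint_apply_sq hS₀ _ hβ₀, hsolve]
end
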